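/- For every integer t with 1 ≤ t ≤ n, the probability that y_t > t/(2n) is at least 1 − exp(−t/6). -/

import Mathlib

/-!
`y_t ≤ a` exactly when at least `t` of the `x_i` lie in `[0, a]`. For `a = t / (2n)` that count
is a sum of `n` independent Bernoulli(`a`) indicators with mean `t / 2`, and the Chernoff bound at
`s = log 2` gives `P(count ≥ t) ≤ 2⁻ᵗ (1 + a)ⁿ ≤ 2⁻ᵗ e^{t/2} ≤ e^{-t/6}`, as `log 2 > 2/3`.
-/

open MeasureTheory ProbabilityTheory Finset Real

lemma Monotone.le_iff_lt_card_filter_le {α : Type*} [LinearOrder α] {n : ℕ} {y : Fin n → α}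
    (hy : Monotone y) (k : Fin n) (a : α) : y k ≤ a ↔ (k : ℕ) < #{i | y i ≤ a} := by
  constructor
  · intro hk
    calc (k : ℕ) < #(Iic k) := by rw [Fin.card_Iic]; omega
      _ ≤ #{i | y i ≤ a} := card_le_card fun i hi =>
        mem_filter.2 ⟨mem_univ i, (hy (mem_Iic.1 hi)).trans hk⟩
  · intro hk
    by_contra! hak
    have : ({i | y i ≤ a} : Finset (Fin n)) ⊆ Iio k := fun i hi => by
      rw [mem_Iio]
      by_contra! hki
      exact (hak.trans_le (hy hki)).not_ge (mem_filter.1 hi).2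
    exact (card_le_card this).not_gt (by rwa [Fin.card_Iio])

lemma card_filter_perm {ι : Type*} [Fintype ι] (p : ι → Prop) [DecidablePred p]
    (σ : Equiv.Perm ι) : #{i | p (σ i)} = #{i | p i} :=
  card_equiv σ (by simp)

lemma Monotone.le_iff_lt_card_filter_le_of_perm {α : Type*} [LinearOrder α] {n : ℕ}
    {x y : Fin n → α} (hy : Monotone y) {σ : Equiv.Perm (Fin n)} (hσ : ∀ i, y i = x (σ i))
    (k : Fin n) (a : α) : y k ≤ a ↔ (k : ℕ) < #{i | x i ≤ a} := by
  rw [hy.le_iff_lt_card_filter_le, ← card_filter_perm (fun j => x j ≤ a) σ]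
  simp only [hσ]

lemma sum_indicator_setOf_one_eq_card {ι Ω R : Type*} [Fintype ι] [AddCommMonoidWithOne R]
    (P : ι → Ω → Prop) [∀ i, DecidablePred (P i)] (ω : Ω) :
    ∑ i, {ω | P i ω}.indicator (1 : Ω → R) ω = #{i | P i ω} := by
  rw [natCast_card_filter]
  exact sum_congr rfl fun i _ => by by_cases h : P i ω <;> simp [h]

section Bernoulli

lemma exp_mul_indicator_one {Ω : Type*} (A : Set Ω) (s : ℝ) (ω : Ω) :
    exp (s * A.indicator 1 ω) = 1 + (exp s - 1) * A.indicator 1 ω := by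
  by_cases hω : ω ∈ A <;> simp [hω]

variable {Ω ι : Type*} [MeasurableSpace Ω] {μ : Measure Ω} [IsProbabilityMeasure μ]

lemma integrable_exp_mul_indicator_one {A : Set Ω} (hA : MeasurableSet A) (s : ℝ) :
    Integrable (fun ω => exp (s * A.indicator (1 : Ω → ℝ) ω)) μ := by
  simp_rw [exp_mul_indicator_one]
  exact (integrable_const 1).add (((integrable_const 1).indicator hA).const_mul _)

lemma mgf_indicator_one {A : Set Ω} (hA : MeasurableSet A) (s : ℝ) :
    mgf (A.indicator 1) μ s = 1 + μ.real A * (exp s - 1) := by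
  simp_rw [mgf, exp_mul_indicator_one]
  rw [integral_add (integrable_const 1) (((integrable_const 1).indicator hA).const_mul _),
    integral_const_mul, integral_indicator_one hA]
  simp [mul_comm]

variable [Fintype ι] {A : ι → Set Ω}

lemma measureReal_sum_indicator_ge_le_exp_mul_prod (hA : ∀ i, MeasurableSet (A i))
    (hind : iIndepFun (fun i => (A i).indicator (1 : Ω → ℝ)) μ) {s : ℝ} (hs : 0 ≤ s) (t : ℝ) :
    μ.real {ω | t ≤ ∑ i, (A i).indicator 1 ω} ≤
      exp (-s * t) * ∏ i, (1 + μ.real (A i) * (exp s - 1)) := by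
  have hmeas i : Measurable ((A i).indicator (1 : Ω → ℝ)) := measurable_one.indicator (hA i)
  have hint := hind.integrable_exp_mul_sum hmeas (s := univ) (t := s)
    fun i _ => integrable_exp_mul_indicator_one (hA i) s
  have := measure_ge_le_exp_mul_mgf t hs hint
  simpa only [hind.mgf_sum hmeas, mgf_indicator_one (hA _), Finset.sum_apply] using this

lemma measureReal_sum_indicator_ge_le_exp_neg_div_six (hA : ∀ i, MeasurableSet (A i))
    (hind : iIndepFun (fun i => (A i).indicator (1 : Ω → ℝ)) μ) {p t : ℝ}
    (hp : ∀ i, μ.real (A i) ≤ p) (ht0 : 0 ≤ t) (ht : 2 * Fintype.card ι * p ≤ t) :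
    μ.real {ω | t ≤ ∑ i, (A i).indicator 1 ω} ≤ exp (-t / 6) := by
  have hprod : ∏ i, (1 + μ.real (A i) * (exp (log 2) - 1)) ≤ exp (t / 2) := calc
    _ ≤ ∏ _i : ι, exp p := by
        rw [exp_log two_pos]
        refine prod_le_prod (fun i _ => ?_) fun i _ => ?_
        · linarith [measureReal_nonneg (μ := μ) (s := A i)]
        · linarith [add_one_le_exp p, hp i]
    _ = exp (Fintype.card ι * p) := by rw [prod_const, ← exp_nat_mul, card_univ]
    _ ≤ exp (t / 2) := exp_le_exp.2 (by linarith)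
  calc _ ≤ exp (-log 2 * t) * ∏ i, (1 + μ.real (A i) * (exp (log 2) - 1)) :=
        measureReal_sum_indicator_ge_le_exp_mul_prod hA hind (log_nonneg one_le_two) t
    _ ≤ exp (-log 2 * t) * exp (t / 2) := by gcongr
    _ = exp (-(log 2 - 1 / 2) * t) := by rw [← exp_add]; ring_nf
    _ ≤ exp (-t / 6) := exp_le_exp.2 (by nlinarith [log_two_gt_d9])

end Bernoulli

lemma measureReal_setOf_le_of_map_eq_restrict_Icc {Ω : Type*} [MeasurableSpace Ω] {μ : Measure Ω}
    {X : Ω → ℝ} (hX : Measurable X) (hunif : μ.map X = volume.restrict (Set.Icc 0 1))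
    {a : ℝ} (ha0 : 0 ≤ a) (ha1 : a ≤ 1) : μ.real {ω | X ω ≤ a} = a := by
  change μ.real (X ⁻¹' Set.Iic a) = a
  rw [← map_measureReal_apply hX measurableSet_Iic, hunif,
    measureReal_restrict_apply measurableSet_Iic,
    show Set.Iic a ∩ Set.Icc 0 1 = Set.Icc 0 a by grind, Real.volume_real_Icc]
  simp [ha0]

/-- Let `X 0, …, X (n-1)` be i.i.d. uniform on `[0,1]` and let
`Y` be their order statistics. For every integer `t` with `1 ≤ t ≤ n`,
`Pr[y_t > t/(2n)] ≥ 1 − exp(−t/6)`. -/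
theorem stmt_1
    {Ω : Type*} [MeasurableSpace Ω] {μ : Measure Ω} [IsProbabilityMeasure μ]
    {n : ℕ}
    (X Y : Fin n → Ω → ℝ)
    (hmeas : ∀ i, Measurable (X i))
    (hindep : iIndepFun X μ)
    (hunif : ∀ i, Measure.map (X i) μ = volume.restrict (Set.Icc (0 : ℝ) 1))
    (hsorted : ∀ ω, Monotone fun i => Y i ω)
    (hperm : ∀ ω, ∃ σ : Equiv.Perm (Fin n), ∀ i, Y i ω = X (σ i) ω)
    (t : ℕ) (ht1 : 1 ≤ t) (ht2 : t ≤ n) :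
    ENNReal.ofReal (1 - Real.exp (-(t : ℝ) / 6)) ≤
      μ {ω | (t : ℝ) / (2 * n) < Y ⟨t - 1, by omega⟩ ω} := by
  have hn0 : (0 : ℝ) < n := mod_cast (show 0 < n by omega)
  have htn : (t : ℝ) ≤ n := mod_cast ht2
  set a : ℝ := t / (2 * n) with ha
  have ha0 : 0 ≤ a := by positivity
  have ha1 : a ≤ 1 := by rw [ha, div_le_one (by positivity)]; linarith
  set A : Fin n → Set Ω := fun i => {ω | X i ω ≤ a}
  have hA i : MeasurableSet (A i) := hmeas i measurableSet_Iic
  have hind : iIndepFun (fun i => (A i).indicator (1 : Ω → ℝ)) μ :=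
    hindep.comp (fun _ => (Set.Iic a).indicator 1)
      fun _ => measurable_one.indicator measurableSet_Iic
  have hevent : {ω | a < Y ⟨t - 1, by omega⟩ ω} = {ω | (t : ℝ) ≤ ∑ i, (A i).indicator 1 ω}ᶜ := by
    ext ω
    obtain ⟨σ, hσ⟩ := hperm ω
    simp only [Set.mem_ofPred_eq, Set.mem_compl_iff, ← not_le, A, sum_indicator_setOf_one_eq_card,
      (hsorted ω).le_iff_lt_card_filter_le_of_perm (x := (X · ω)) hσ]
    norm_cast; omega
  have htail := measureReal_sum_indicator_ge_le_exp_neg_div_six hA hind (p := a) (t := t)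
    (fun i => (measureReal_setOf_le_of_map_eq_restrict_Icc (hmeas i) (hunif i) ha0 ha1).le)
    (by positivity)
    (by rw [ha, Fintype.card_fin]; field_simp; rfl)
  rw [← ofReal_measureReal, hevent, probReal_compl_eq_one_sub (measurableSet_le measurable_const
    (Finset.measurable_sum _ fun i _ => measurable_one.indicator (hA i)))]
  exact ENNReal.ofReal_le_ofReal (by linarith)
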